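/- Let w ∈ A_∞ on ℝⁿ with Fujii–Wilson constant [w]_{A_∞}. Then log w belongs to the weighted BMO space BMO_w with ‖log w‖_{BMO_w} ≤ 2^{n+3}([w]_{A_∞} − 1). Moreover, for each cube Q, (1/w(Q))∫_Q |log w − (log w)_{Q,w}| w dx ≤ 2^{n+3}((1/w(Q))∫_Q M(wχ_Q) dx − 1). -/

import Mathlib

/-!
On a cube `Q` with Lebesgue mean `a = w_Q`, Jensen's inequality gives `log a ≤ (log w)_{Q,w}`;
since `log w - (log w)_{Q,w}` has `w`-mean zero, the oscillation is at most
`2 ∫_Q (log (w / a))⁺ w`. By the layer-cake formula this equals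
`2 ∫_a^∞ w(Q ∩ {w > λ}) dλ / λ`. For `λ > a`, the Calderón–Zygmund decomposition of `Q` into
maximal dyadic subcubes on which `w` has average above `λ` gives
`w(Q ∩ {w > λ}) ≤ 2ⁿ λ |Q ∩ {M(wχ_Q) > λ}|`, and integrating in `λ` turns the right-hand side into
`2ⁿ ∫_Q (M(wχ_Q) - a) = 2ⁿ (∫_Q M(wχ_Q) - w(Q))`. So the normalized oscillation is at most
`2^(n+1) ((1/w(Q)) ∫_Q M(wχ_Q) - 1)`.
-/

open MeasureTheory Real

noncomputable section

/-- `Rn n` is Euclidean space `ℝⁿ` with the sup metric, so that closed balls are cubes. -/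
abbrev Rn (n : ℕ) := Fin n → ℝ

/-- An (axis-parallel, closed) cube in `ℝⁿ`: a closed ball for the sup metric with
positive radius. -/
def IsCube {n : ℕ} (Q : Set (Rn n)) : Prop :=
  ∃ (c : Rn n) (r : ℝ), 0 < r ∧ Q = Metric.closedBall c r

/-- Lebesgue measure `|Q|` as a real number. -/
def vol {n : ℕ} (Q : Set (Rn n)) : ℝ := (volume Q).toReal

/-- `w(Q) = ∫_Q w`. -/
def intOn {n : ℕ} (w : Rn n → ℝ) (Q : Set (Rn n)) : ℝ := ∫ x in Q, w x

/-- Lebesgue average `(1/|Q|) ∫_Q f`. -/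
def avgOn {n : ℕ} (Q : Set (Rn n)) (f : Rn n → ℝ) : ℝ := (vol Q)⁻¹ * ∫ x in Q, f x

/-- Weighted average `f_{Q,w} = (1/w(Q)) ∫_Q f w`. -/
def wavgOn {n : ℕ} (w : Rn n → ℝ) (Q : Set (Rn n)) (f : Rn n → ℝ) : ℝ :=
  (intOn w Q)⁻¹ * ∫ x in Q, f x * w x

/-- Hardy–Littlewood maximal function over cubes. -/
def maximalFn {n : ℕ} (f : Rn n → ℝ) (x : Rn n) : ℝ :=
  sSup {a | ∃ Q : Set (Rn n), IsCube Q ∧ x ∈ Q ∧ a = avgOn Q (fun y => |f y|)}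

/-- The set of ratios defining the Fujii–Wilson `A_∞` constant. -/
def fwSet {n : ℕ} (w : Rn n → ℝ) : Set ℝ :=
  {a | ∃ Q : Set (Rn n), IsCube Q ∧
    a = (intOn w Q)⁻¹ * ∫ x in Q, maximalFn (Q.indicator w) x}

/-- Fujii–Wilson constant `[w]_{A_∞} = sup_Q (1/w(Q)) ∫_Q M(w χ_Q)`. -/
def fujiiWilson {n : ℕ} (w : Rn n → ℝ) : ℝ := sSup (fwSet w)

open Classical in
/-- The `A_p` ratio of `w` on the cube `Q`:
`((1/|Q|)∫_Q w)((1/|Q|)∫_Q w^{1-p'})^{p-1}` for `p > 1` (note `1 - p' = -1/(p-1)`),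
with the ess-sup convention for `p = 1`. -/
def apRatio {n : ℕ} (p : ℝ) (w : Rn n → ℝ) (Q : Set (Rn n)) : ℝ :=
  if p = 1 then
    avgOn Q w * essSup (fun x => (w x)⁻¹) (volume.restrict Q)
  else
    avgOn Q w * (avgOn Q (fun x => w x ^ (-(p - 1)⁻¹))) ^ (p - 1)

/-- The set of `A_p` ratios of `w` over all cubes. -/
def apSet {n : ℕ} (p : ℝ) (w : Rn n → ℝ) : Set ℝ :=
  {a | ∃ Q : Set (Rn n), IsCube Q ∧ a = apRatio p w Q}

/-- The Muckenhoupt `A_p` constant `[w]_{A_p}`. -/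
def apConst {n : ℕ} (p : ℝ) (w : Rn n → ℝ) : ℝ := sSup (apSet p w)

/-- The set of ratios defining the Hruščev `A_∞` constant. -/
def hruscevSet {n : ℕ} (w : Rn n → ℝ) : Set ℝ :=
  {a | ∃ Q : Set (Rn n), IsCube Q ∧
    a = avgOn Q w * Real.exp (avgOn Q (fun x => Real.log (w x)⁻¹))}

/-- Hruščev constant `[w]'_{A_∞} = sup_Q ((1/|Q|)∫_Q w) exp((1/|Q|)∫_Q log w⁻¹)`. -/
def hruscev {n : ℕ} (w : Rn n → ℝ) : ℝ := sSup (hruscevSet w)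

/-- The set of ratios defining the logarithmic `A_∞` constant. -/
def logAinfSet {n : ℕ} (w : Rn n → ℝ) : Set ℝ :=
  {a | ∃ Q : Set (Rn n), IsCube Q ∧
    a = (intOn w Q)⁻¹ * ∫ x in Q, (1 + max (Real.log (w x / avgOn Q w)) 0) * w x}

/-- Logarithmic `A_∞` constant
`[w]_{A_∞}^{log} = sup_Q (1/w(Q)) ∫_Q (1 + log⁺(w/w_Q)) w`. -/
def logAinf {n : ℕ} (w : Rn n → ℝ) : ℝ := sSup (logAinfSet w)

/-- The set of mean oscillations of `f` over cubes. -/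
def bmoSet {n : ℕ} (f : Rn n → ℝ) : Set ℝ :=
  {a | ∃ Q : Set (Rn n), IsCube Q ∧ a = avgOn Q (fun x => |f x - avgOn Q f|)}

/-- The `BMO` seminorm `‖f‖_{BMO} = sup_Q (1/|Q|) ∫_Q |f - f_Q|`. -/
def bmoNorm {n : ℕ} (f : Rn n → ℝ) : ℝ := sSup (bmoSet f)

/-- The set of weighted mean oscillations of `f` over cubes. -/
def bmoWSet {n : ℕ} (w f : Rn n → ℝ) : Set ℝ :=
  {a | ∃ Q : Set (Rn n), IsCube Q ∧
    a = (intOn w Q)⁻¹ * ∫ x in Q, |f x - wavgOn w Q f| * w x}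

/-- The weighted `BMO` seminorm `‖f‖_{BMO_w} = sup_Q (1/w(Q)) ∫_Q |f - f_{Q,w}| w`. -/
def bmoWNorm {n : ℕ} (w f : Rn n → ℝ) : ℝ := sSup (bmoWSet w f)

open Metric Set Filter Topology
open scoped ENNReal

section MeasureTheory

variable {α : Type*} [MeasurableSpace α] {μ : Measure α}

theorem integral_abs_eq_two_mul_integral_max_zero {u : α → ℝ} (hu : Integrable u μ)
    (hu0 : ∫ x, u x ∂μ = 0) : ∫ x, |u x| ∂μ = 2 * ∫ x, max (u x) 0 ∂μ := by
  have habs : ∀ x, |u x| = 2 * max (u x) 0 - u x := fun x => by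
    rcases le_total (u x) 0 with h | h
    · rw [abs_of_nonpos h, max_eq_right h]; ring
    · rw [abs_of_nonneg h, max_eq_left h]; ring
  simp_rw [habs]
  rw [integral_sub (hu.pos_part.const_mul 2) hu, integral_const_mul, hu0, sub_zero]

theorem sub_le_log_sub_log_mul {a t : ℝ} (ha : 0 < a) (ht : 0 < t) :
    t - a ≤ (log t - log a) * t := by
  have h := log_le_sub_one_of_pos (div_pos ha ht)
  rw [log_div ha.ne' ht.ne'] at h
  have h' : (1 - a / t) * t ≤ (log t - log a) * t :=
    mul_le_mul_of_nonneg_right (by linarith) ht.le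
  rwa [sub_mul, one_mul, div_mul_cancel₀ _ ht.ne'] at h'

theorem log_average_mul_integral_le [IsFiniteMeasure μ] {w : α → ℝ} (hw : Integrable w μ)
    (hwpos : ∀ᵐ x ∂μ, 0 < w x) (hwlog : Integrable (fun x => log (w x) * w x) μ)
    (ha : 0 < ⨍ x, w x ∂μ) :
    log (⨍ x, w x ∂μ) * ∫ x, w x ∂μ ≤ ∫ x, log (w x) * w x ∂μ := by
  set a := ⨍ x, w x ∂μ
  have hmono : ∫ x, (w x - a) ∂μ ≤ ∫ x, (log (w x) * w x - log a * w x) ∂μ :=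
    integral_mono_ae (hw.sub (integrable_const a)) (hwlog.sub (hw.const_mul _))
      (hwpos.mono fun x hx => by linarith [sub_le_log_sub_log_mul ha hx])
  rw [integral_sub_average, integral_sub hwlog (hw.const_mul _), integral_const_mul] at hmono
  linarith

theorem lintegral_Ioi_measure_lt {f : α → ℝ} (hf : AEMeasurable f μ) (a : ℝ) :
    ∫⁻ t in Ioi a, μ {x | t < f x} = ∫⁻ x, ENNReal.ofReal (f x - a) ∂μ := by
  have hpos : ∀ x, ENNReal.ofReal (f x - a) = ENNReal.ofReal (max (f x - a) 0) := fun x => by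
    rw [ENNReal.ofReal_max, ENNReal.ofReal_zero, max_zero]
  simp_rw [hpos]
  rw [lintegral_eq_lintegral_meas_lt (f := fun x => max (f x - a) 0) μ
    (ae_of_all _ fun x => le_max_right _ _) ((hf.sub aemeasurable_const).max aemeasurable_const)]
  have h := (measurePreserving_add_right (volume : Measure ℝ) a).setLIntegral_comp_emb
    (measurableEmbedding_addRight a) (fun t => μ {x | t < f x}) (Ioi 0)
  rw [image_add_const_Ioi, zero_add] at h
  rw [← h]
  refine setLIntegral_congr_fun measurableSet_Ioi fun t ht => ?_
  congr 1
  ext x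
  simp only [mem_ofPred_eq, lt_max_iff, not_lt.2 (le_of_lt (mem_Ioi.1 ht)), or_false]
  constructor <;> intro h <;> linarith

theorem lintegral_Ioi_indicator_div_eq {a t : ℝ} (ha : 0 < a) (ht : 0 ≤ t) :
    ∫⁻ s in Ioi a, (Iio t).indicator (fun s => ENNReal.ofReal (t / s)) s
      = ENNReal.ofReal ((log t - log a) * t) := by
  rw [lintegral_indicator measurableSet_Iio, Measure.restrict_restrict measurableSet_Iio,
    Iio_inter_Ioi]
  rcases le_or_gt t a with hta | hat
  · rw [Ioo_eq_empty hta.not_gt, Measure.restrict_empty, lintegral_zero_measure, eq_comm,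
      ENNReal.ofReal_eq_zero]
    rcases ht.eq_or_lt with rfl | ht
    · simp
    · exact mul_nonpos_of_nonpos_of_nonneg (by linarith [log_le_log ht hta]) ht.le
  · have hint : IntegrableOn (fun s => t / s) (Ioc a t) := by
      refine (ContinuousOn.integrableOn_Icc ?_).mono_set Ioc_subset_Icc_self
      exact continuousOn_const.div continuousOn_id fun s hs => (ha.trans_le hs.1).ne'
    rw [restrict_Ioo_eq_restrict_Ioc, ← ofReal_integral_eq_lintegral_ofReal hint
      ((ae_restrict_iff' measurableSet_Ioc).2 (ae_of_all _ fun s hs =>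
        div_nonneg ht (ha.trans hs.1).le)), ← intervalIntegral.integral_of_le hat.le]
    simp_rw [div_eq_mul_inv t]
    rw [intervalIntegral.integral_const_mul, integral_inv_of_pos ha (ha.trans hat),
      log_div (ha.trans hat).ne' ha.ne', mul_comm]

theorem lintegral_log_sub_log_mul_eq [SFinite μ] {w : α → ℝ} (hw : Measurable w)
    (hw0 : ∀ x, 0 ≤ w x) {a : ℝ} (ha : 0 < a) :
    ∫⁻ x, ENNReal.ofReal ((log (w x) - log a) * w x) ∂μ
      = ∫⁻ t in Ioi a, (ENNReal.ofReal t)⁻¹ * ∫⁻ x in {y | t < w y}, ENNReal.ofReal (w x) ∂μ := by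
  set F : α → ℝ → ℝ≥0∞ := fun x t => (Iio (w x)).indicator (fun s => ENNReal.ofReal (w x / s)) t
  have hF : Measurable (Function.uncurry F) := by
    refine Measurable.ite (measurableSet_lt measurable_snd (hw.comp measurable_fst)) ?_
      measurable_const
    exact ((hw.comp measurable_fst).div measurable_snd).ennreal_ofReal
  simp_rw [← lintegral_Ioi_indicator_div_eq ha (hw0 _)]
  rw [lintegral_lintegral_swap hF.aemeasurable]
  refine setLIntegral_congr_fun measurableSet_Ioi fun t ht => ?_
  have ht0 : 0 < t := ha.trans ht
  rw [← lintegral_const_mul' _ _ (ENNReal.inv_ne_top.2 (ENNReal.ofReal_pos.2 ht0).ne'),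
    ← lintegral_indicator (measurableSet_lt measurable_const hw)]
  refine lintegral_congr fun x => ?_
  by_cases hx : t < w x
  · simp [F, hx, ENNReal.ofReal_div_of_pos ht0, ENNReal.div_eq_inv_mul]
  · simp [F, hx]

theorem integral_abs_log_sub_wavg_le [IsFiniteMeasure μ] {w : α → ℝ} (hw : Integrable w μ)
    (hwpos : ∀ᵐ x ∂μ, 0 < w x) (hwlog : Integrable (fun x => log (w x) * w x) μ)
    (ha : 0 < ⨍ x, w x ∂μ) :
    ∫ x, |log (w x) - (∫ y, w y ∂μ)⁻¹ * ∫ y, log (w y) * w y ∂μ| * w x ∂μ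
      ≤ 2 * ∫ x, max ((log (w x) - log (⨍ y, w y ∂μ)) * w x) 0 ∂μ := by
  set W := ∫ y, w y ∂μ
  set m := W⁻¹ * ∫ y, log (w y) * w y ∂μ
  have hW : 0 < W := by
    rw [average_eq, smul_eq_mul] at ha
    exact pos_of_mul_pos_right ha (inv_nonneg.2 measureReal_nonneg)
  have hu_eq : (fun x => (log (w x) - m) * w x) = fun x => log (w x) * w x - m * w x := by
    funext x; ring
  have hu : Integrable (fun x => (log (w x) - m) * w x) μ := by
    rw [hu_eq]; exact hwlog.sub (hw.const_mul m)
  have hu0 : ∫ x, (log (w x) - m) * w x ∂μ = 0 := by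
    rw [hu_eq, integral_sub hwlog (hw.const_mul m), integral_const_mul, sub_eq_zero, mul_comm,
      ← mul_assoc, mul_inv_cancel₀ hW.ne', one_mul]
  have hm : log (⨍ y, w y ∂μ) ≤ m := by
    rw [le_inv_mul_iff₀ hW, mul_comm]
    exact log_average_mul_integral_le hw hwpos hwlog ha
  have habs : ∀ᵐ x ∂μ, |log (w x) - m| * w x = |(log (w x) - m) * w x| :=
    hwpos.mono fun x hx => by rw [abs_mul, abs_of_pos hx]
  rw [integral_congr_ae habs, integral_abs_eq_two_mul_integral_max_zero hu hu0]
  gcongr 1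
  refine integral_mono_ae hu.pos_part ?_ (hwpos.mono fun x hx => ?_)
  · refine (hwlog.sub (hw.const_mul (log (⨍ y, w y ∂μ)))).pos_part.congr
      (ae_of_all _ fun x => ?_)
    simp only [Pi.sub_apply, sub_mul]
  · exact max_le_max (mul_le_mul_of_nonneg_right (by linarith) hx.le) le_rfl

end MeasureTheory

section Cubes

variable {n : ℕ}

theorem avgOn_eq_setAverage (Q : Set (Rn n)) (f : Rn n → ℝ) : avgOn Q f = ⨍ x in Q, f x := by
  rw [setAverage_eq, smul_eq_mul]
  rfl

theorem volume_closedBall_rn (c : Rn n) {r : ℝ} (hr : 0 ≤ r) :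
    volume (closedBall c r) = ENNReal.ofReal ((2 * r) ^ n) := by
  simpa using Real.volume_pi_closedBall c hr

theorem vol_closedBall (c : Rn n) {r : ℝ} (hr : 0 ≤ r) : vol (closedBall c r) = (2 * r) ^ n := by
  rw [vol, volume_closedBall_rn c hr, ENNReal.toReal_ofReal (by positivity)]

def cubeAverages (f : Rn n → ℝ) (x : Rn n) : Set ℝ :=
  {a | ∃ Q : Set (Rn n), IsCube Q ∧ x ∈ Q ∧ a = avgOn Q (fun y => |f y|)}

theorem avgOn_le_maximalFn {f : Rn n → ℝ} {x : Rn n} (hbdd : BddAbove (cubeAverages f x))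
    {Q : Set (Rn n)} (hQ : IsCube Q) (hx : x ∈ Q) :
    avgOn Q (fun y => |f y|) ≤ maximalFn f x :=
  le_csSup hbdd ⟨Q, hQ, hx, rfl⟩

theorem maximalFn_congr_ae {f g : Rn n → ℝ} (h : f =ᵐ[volume] g) : maximalFn f = maximalFn g := by
  have havg : ∀ Q : Set (Rn n), avgOn Q (fun y => |f y|) = avgOn Q (fun y => |g y|) :=
    fun Q => by rw [avgOn, avgOn, integral_congr_ae (ae_restrict_of_ae (h.mono fun y hy => by
      rw [hy]))]
  funext x
  simp_rw [maximalFn, havg]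

theorem ae_bddAbove_cubeAverages {F : Rn n → ℝ} (hF : Integrable F) :
    ∀ᵐ x, BddAbove (cubeAverages F x) := by
  set G := fun y => |F y|
  have hG : Integrable G := hF.abs
  have hG0 : ∀ y, 0 ≤ G y := fun y => abs_nonneg _
  filter_upwards [IsUnifLocDoublingMeasure.ae_tendsto_average (μ := volume)
    hG.locallyIntegrable 1] with x hx
  have hlim : Tendsto (fun ρ => avgOn (closedBall x ρ) G) (𝓝[>] 0) (𝓝 (G x)) := by
    simp_rw [avgOn_eq_setAverage]
    refine hx (fun _ => x) id tendsto_id (eventually_mem_nhdsWithin.mono fun ρ hρ => ?_)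
    simpa using (le_of_lt hρ : (0 : ℝ) ≤ ρ)
  obtain ⟨u, hu, hsmall⟩ := mem_nhdsGT_iff_exists_Ioo_subset.1
    (hlim.eventually (eventually_lt_nhds (lt_add_one (G x))))
  refine ⟨max (2 ^ n * (G x + 1)) ((∫ y, G y) / u ^ n), ?_⟩
  rintro _ ⟨_, ⟨z, ρ, hρ, rfl⟩, hxQ, rfl⟩
  rw [avgOn, vol_closedBall z hρ.le]
  rcases lt_or_ge (2 * ρ) u with hρu | hρu
  · -- a small cube around `x` sits in the centred cube of twice its side
    have hsub : closedBall z ρ ⊆ closedBall x (2 * ρ) := fun y hy => by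
      rw [mem_closedBall] at hy hxQ ⊢
      linarith [dist_triangle_right y x z]
    have hx2 : avgOn (closedBall x (2 * ρ)) G < G x + 1 := hsmall ⟨by positivity, hρu⟩
    rw [avgOn, vol_closedBall x (by positivity)] at hx2
    refine le_max_of_le_left ?_
    calc ((2 * ρ) ^ n)⁻¹ * ∫ y in closedBall z ρ, G y
        ≤ ((2 * ρ) ^ n)⁻¹ * ∫ y in closedBall x (2 * ρ), G y :=
          mul_le_mul_of_nonneg_left (setIntegral_mono_set hG.integrableOn
            (ae_of_all _ hG0) hsub.eventuallyLE) (by positivity)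
      _ = 2 ^ n * (((2 * (2 * ρ)) ^ n)⁻¹ * ∫ y in closedBall x (2 * ρ), G y) := by
          rw [mul_pow 2 (2 * ρ), mul_inv, ← mul_assoc, ← mul_assoc,
            mul_inv_cancel₀ (by positivity), one_mul]
      _ ≤ 2 ^ n * (G x + 1) := by gcongr
  · refine le_max_of_le_right ?_
    rw [inv_mul_eq_div]
    exact div_le_div₀ (integral_nonneg hG0) (setIntegral_le_integral hG (ae_of_all _ hG0))
      (pow_pos hu n) (pow_le_pow_left₀ hu.le hρu n)

theorem IsCube.measurableSet {Q : Set (Rn n)} (hQ : IsCube Q) : MeasurableSet Q := by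
  obtain ⟨c, r, -, rfl⟩ := hQ
  exact measurableSet_closedBall

theorem ae_avgOn_le_maximalFn (hw0 : ∀ x, 0 ≤ w x) {Q : Set (Rn n)} (hQ : IsCube Q)
    (hw : IntegrableOn w Q) : ∀ᵐ x ∂volume.restrict Q, avgOn Q w ≤ maximalFn (Q.indicator w) x := by
  have havg : avgOn Q (fun y => |Q.indicator w y|) = avgOn Q w := by
    rw [avgOn, avgOn, setIntegral_congr_fun (g := w) hQ.measurableSet fun y hy => by
      simp only [indicator_of_mem hy, abs_of_nonneg (hw0 y)]]
  filter_upwards [ae_restrict_mem hQ.measurableSet, ae_restrict_of_ae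
    (ae_bddAbove_cubeAverages ((integrable_indicator_iff hQ.measurableSet).2 hw))] with x hx hbdd
  exact havg ▸ avgOn_le_maximalFn hbdd hQ hx

end Cubes

namespace DyadicGrid

variable {n : ℕ}

theorem volume_setOf_apply_eq (i : Fin n) (t : ℝ) : volume {x : Rn n | x i = t} = 0 := by
  have h : {x : Rn n | x i = t} = univ.pi (Function.update (fun _ => (univ : Set ℝ)) i {t}) := by
    ext x
    simp only [mem_ofPred_eq, mem_univ_pi]
    refine ⟨fun hx j => ?_, fun hx => by simpa using hx i⟩
    rcases eq_or_ne j i with rfl | hj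
    · simp [hx]
    · simp [hj]
  rw [h, volume_pi_pi]
  exact Finset.prod_eq_zero (Finset.mem_univ i) (by simp)

section Grid

/- Generation `k` of the dyadic subdivision of `closedBall c r`: `box c r k j` is the half-open
subbox with integer coordinates `j` and `cube c r k j` its closure, a sup-metric ball;
`index c r k x` locates the box containing `x`, and `ancestor k m j` the generation-`m` box
containing box `j` of generation `k`. -/

variable (c : Rn n) (r : ℝ)

def side (k : ℕ) : ℝ := 2 * r / 2 ^ k

def corner (k : ℕ) (j : Fin n → ℕ) (i : Fin n) : ℝ := c i - r + j i * side r k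

def box (k : ℕ) (j : Fin n → ℕ) : Set (Rn n) :=
  univ.pi fun i => Ico (corner c r k j i) (corner c r k j i + side r k)

def cube (k : ℕ) (j : Fin n → ℕ) : Set (Rn n) :=
  closedBall (fun i => corner c r k j i + side r k / 2) (r / 2 ^ k)

def index (k : ℕ) (x : Rn n) : Fin n → ℕ := fun i => ⌊(x i - (c i - r)) / side r k⌋₊

def ancestor (k m : ℕ) (j : Fin n → ℕ) : Fin n → ℕ := fun i => j i / 2 ^ (k - m)

variable {c r}

theorem side_pos (hr : 0 < r) (k : ℕ) : 0 < side r k := by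
  unfold side; positivity

theorem side_eq_pow_mul {m k : ℕ} (hmk : m ≤ k) : side r m = 2 ^ (k - m) * side r k := by
  rw [side, side, ← Nat.add_sub_cancel' hmk, pow_add, Nat.add_sub_cancel_left]
  field_simp

theorem side_zero : side r 0 = 2 * r := by simp [side]

theorem mem_box {k : ℕ} {j : Fin n → ℕ} {x : Rn n} :
    x ∈ box c r k j ↔ ∀ i, corner c r k j i ≤ x i ∧ x i < corner c r k j i + side r k := by
  simp [box]

theorem cube_eq_pi (hr : 0 < r) (k : ℕ) (j : Fin n → ℕ) :
    cube c r k j = univ.pi fun i => Icc (corner c r k j i) (corner c r k j i + side r k) := by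
  rw [cube, closedBall_pi _ (by positivity)]
  refine pi_congr rfl fun i _ => ?_
  rw [Real.closedBall_eq_Icc]
  congr 1 <;> · unfold side; ring

theorem isCube_cube (hr : 0 < r) (k : ℕ) (j : Fin n → ℕ) : IsCube (cube c r k j) :=
  ⟨_, _, by positivity, rfl⟩

theorem cube_zero : cube c r 0 0 = closedBall c r := by
  simp [cube, corner, side]

theorem box_subset_cube (hr : 0 < r) (k : ℕ) (j : Fin n → ℕ) : box c r k j ⊆ cube c r k j := by
  rw [cube_eq_pi hr]
  exact pi_mono fun i _ => Ico_subset_Icc_self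

theorem box_ae_eq_cube (hr : 0 < r) (k : ℕ) (j : Fin n → ℕ) :
    box c r k j =ᵐ[volume] cube c r k j := by
  refine (box_subset_cube hr k j).eventuallyLE.antisymm (ae_le_set.2 ?_)
  refine measure_mono_null (fun x hx => ?_)
    (measure_iUnion_null fun i => volume_setOf_apply_eq i (corner c r k j i + side r k))
  obtain ⟨hx, hxbox⟩ := hx
  rw [cube_eq_pi hr, mem_univ_pi] at hx
  rw [mem_box] at hxbox
  push Not at hxbox
  obtain ⟨i, hi⟩ := hxbox
  exact mem_iUnion.2 ⟨i, le_antisymm (hx i).2 (hi (hx i).1)⟩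

theorem volume_cube (hr : 0 < r) (k : ℕ) (j : Fin n → ℕ) :
    volume (cube c r k j) = ENNReal.ofReal (side r k ^ n) := by
  rw [cube, volume_closedBall_rn _ (by positivity), side, mul_div_assoc]

theorem volume_box (hr : 0 < r) (k : ℕ) (j : Fin n → ℕ) :
    volume (box c r k j) = ENNReal.ofReal (side r k ^ n) := by
  rw [measure_congr (box_ae_eq_cube hr k j), volume_cube hr]

theorem measurableSet_box (k : ℕ) (j : Fin n → ℕ) : MeasurableSet (box c r k j) :=
  MeasurableSet.univ_pi fun _ => measurableSet_Ico

theorem sub_le_of_mem_box (hr : 0 < r) {k : ℕ} {j : Fin n → ℕ} {x : Rn n}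
    (hx : x ∈ box c r k j) (i : Fin n) : c i - r ≤ x i := by
  have h := (mem_box.1 hx i).1
  have : 0 ≤ (j i : ℝ) * side r k := mul_nonneg (Nat.cast_nonneg _) (side_pos hr k).le
  unfold corner at h
  linarith

theorem index_eq_of_mem_box (hr : 0 < r) {k : ℕ} {j : Fin n → ℕ} {x : Rn n}
    (hx : x ∈ box c r k j) : index c r k x = j := by
  funext i
  obtain ⟨h1, h2⟩ := mem_box.1 hx i
  have hs := side_pos hr k
  have h0 := sub_le_of_mem_box hr hx i
  unfold corner at h1 h2
  rw [index, Nat.floor_eq_iff (div_nonneg (by linarith) hs.le), le_div_iff₀ hs, div_lt_iff₀ hs]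
  constructor <;> linarith

theorem mem_box_index (hr : 0 < r) {x : Rn n} (hx : ∀ i, c i - r ≤ x i) (k : ℕ) :
    x ∈ box c r k (index c r k x) := by
  have hs := side_pos hr k
  refine mem_box.2 fun i => ?_
  have hfl := Nat.floor_le (div_nonneg (sub_nonneg.2 (hx i)) hs.le)
  have hfu := Nat.lt_floor_add_one ((x i - (c i - r)) / side r k)
  rw [le_div_iff₀ hs] at hfl
  rw [div_lt_iff₀ hs] at hfu
  unfold corner index
  constructor <;> linarith

theorem index_lt (hr : 0 < r) {x : Rn n} (hx : x ∈ box c r 0 0) (k : ℕ) (i : Fin n) :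
    index c r k x i < 2 ^ k := by
  have hs := side_pos hr k
  have hside : (2 : ℝ) ^ k * side r k = 2 * r := by
    unfold side; field_simp
  have h := mem_box.1 hx i
  simp only [corner, side_zero, Pi.zero_apply, CharP.cast_eq_zero, zero_mul, add_zero] at h
  rw [index, Nat.floor_lt (div_nonneg (by linarith) hs.le), div_lt_iff₀ hs]
  push_cast
  linarith

theorem index_eq_ancestor {m k : ℕ} (hmk : m ≤ k) (x : Rn n) :
    index c r m x = ancestor k m (index c r k x) := by
  funext i
  have h : (x i - (c i - r)) / side r m
      = (x i - (c i - r)) / side r k / ((2 ^ (k - m) : ℕ) : ℝ) := by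
    rw [side_eq_pow_mul hmk]; push_cast; ring
  rw [index, h, Nat.floor_div_natCast]
  rfl

theorem box_subset_box_ancestor (hr : 0 < r) {m k : ℕ} (hmk : m ≤ k) (j : Fin n → ℕ) :
    box c r k j ⊆ box c r m (ancestor k m j) := fun x hx => by
  rw [← index_eq_of_mem_box hr hx, ← index_eq_ancestor hmk]
  exact mem_box_index hr (sub_le_of_mem_box hr hx) m

theorem box_subset_closedBall (hr : 0 < r) {k : ℕ} {j : Fin n → ℕ} (hj : ∀ i, j i < 2 ^ k) :
    box c r k j ⊆ closedBall c r := by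
  have h0 : ancestor k 0 j = 0 := funext fun i => Nat.div_eq_of_lt (hj i)
  have h := box_subset_box_ancestor (c := c) hr (Nat.zero_le k) j
  rw [h0] at h
  exact h.trans ((box_subset_cube hr 0 0).trans_eq cube_zero)

theorem ae_tendsto_average_cube_index {w : Rn n → ℝ} (hw : LocallyIntegrable w) (hr : 0 < r) :
    ∀ᵐ x, x ∈ box c r 0 0 →
      Tendsto (fun k => ⨍ y in cube c r k (index c r k x), w y) atTop (𝓝 (w x)) := by
  filter_upwards [IsUnifLocDoublingMeasure.ae_tendsto_average (μ := volume) hw 1] with x hx hx0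
  have hδ : Tendsto (fun k : ℕ => r / 2 ^ k) atTop (𝓝[>] 0) := by
    refine tendsto_nhdsWithin_of_tendsto_nhds_of_eventually_within _ ?_
      (Eventually.of_forall fun k => mem_Ioi.2 (by positivity))
    simpa [div_eq_mul_inv] using (tendsto_pow_atTop_nhds_zero_of_lt_one
      (by norm_num : (0 : ℝ) ≤ 1 / 2) (by norm_num)).const_mul r
  refine hx _ _ hδ (Eventually.of_forall fun k => ?_)
  rw [one_mul]
  exact box_subset_cube hr _ _ (mem_box_index hr (sub_le_of_mem_box hr hx0) k)

theorem ancestor_lt {k m : ℕ} (hmk : m ≤ k) {j : Fin n → ℕ} (hj : ∀ i, j i < 2 ^ k) (i : Fin n) :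
    ancestor k m j i < 2 ^ m := by
  rw [ancestor, Nat.div_lt_iff_lt_mul (by positivity), ← pow_add, Nat.add_sub_cancel' hmk]
  exact hj i

end Grid

section CalderonZygmund

variable (w : Rn n → ℝ) (c : Rn n) (r t : ℝ)

def IsHeavy (k : ℕ) (j : Fin n → ℕ) : Prop := t * side r k ^ n < ∫ x in box c r k j, w x

/-- The Calderón–Zygmund boxes at height `t`: the maximal heavy boxes of the grid in
`closedBall c r`. -/
def czIndex : Set (ℕ × (Fin n → ℕ)) :=
  {p | (∀ i, p.2 i < 2 ^ p.1) ∧ IsHeavy w c r t p.1 p.2 ∧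
    ∀ m < p.1, ¬ IsHeavy w c r t m (ancestor p.1 m p.2)}

def czSet : Set (Rn n) := ⋃ p : czIndex w c r t, box c r p.1.1 p.1.2

variable {w c r t}

theorem avgOn_cube_eq (hr : 0 < r) (k : ℕ) (j : Fin n → ℕ) :
    avgOn (cube c r k j) w = (side r k ^ n)⁻¹ * ∫ x in box c r k j, w x := by
  rw [avgOn, vol, volume_cube hr, ENNReal.toReal_ofReal (pow_nonneg (side_pos hr k).le n),
    setIntegral_congr_set (box_ae_eq_cube hr k j)]

theorem isHeavy_iff (hr : 0 < r) {k : ℕ} {j : Fin n → ℕ} :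
    IsHeavy w c r t k j ↔ t < avgOn (cube c r k j) w := by
  rw [IsHeavy, avgOn_cube_eq hr, ← div_eq_inv_mul, lt_div_iff₀ (pow_pos (side_pos hr k) n)]

theorem integral_box_le_of_mem_czIndex (hr : 0 < r) (hw0 : ∀ x, 0 ≤ w x)
    (hw : IntegrableOn w (closedBall c r)) (ht : intOn w (closedBall c r) ≤ t * (2 * r) ^ n)
    {p : ℕ × (Fin n → ℕ)} (hp : p ∈ czIndex w c r t) :
    ∫ x in box c r p.1 p.2, w x ≤ 2 ^ n * (t * side r p.1 ^ n) := by
  obtain ⟨k, j⟩ := p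
  obtain ⟨hj, hheavy, hlight⟩ := hp
  cases k with
  | zero =>
    have hj0 : j = 0 := funext fun i => by simpa using hj i
    have hQ : ∫ x in box c r 0 j, w x = intOn w (closedBall c r) := by
      rw [hj0, intOn, ← cube_zero]
      exact setIntegral_congr_set (box_ae_eq_cube hr 0 0)
    rw [IsHeavy, hQ, side_zero] at hheavy
    exact absurd ht (not_le.2 hheavy)
  | succ k =>
    have hside : side r k = 2 * side r (k + 1) := by
      rw [side_eq_pow_mul (Nat.le_add_right k 1), Nat.add_sub_cancel_left, pow_one]
    calc ∫ x in box c r (k + 1) j, w x ≤ ∫ x in box c r k (ancestor (k + 1) k j), w x :=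
          setIntegral_mono_set
            (hw.mono_set (box_subset_closedBall hr (ancestor_lt k.le_succ hj)))
            (ae_of_all _ hw0) (box_subset_box_ancestor hr k.le_succ j).eventuallyLE
      _ ≤ t * side r k ^ n := not_lt.1 (hlight k k.lt_succ_self)
      _ = 2 ^ n * (t * side r (k + 1) ^ n) := by rw [hside, mul_pow]; ring

theorem pairwise_disjoint_czIndex (hr : 0 < r) :
    Pairwise (Function.onFun Disjoint fun p : czIndex w c r t => box c r p.1.1 p.1.2) := by
  have key : ∀ {p q : ℕ × (Fin n → ℕ)}, p ∈ czIndex w c r t → q ∈ czIndex w c r t →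
      p.1 ≤ q.1 → ∀ x ∈ box c r p.1 p.2, x ∈ box c r q.1 q.2 → p = q := by
    rintro ⟨k, j⟩ ⟨k', j'⟩ hp hq (hkk : k ≤ k') x (hx : x ∈ box c r k j)
      (hx' : x ∈ box c r k' j')
    rw [← index_eq_of_mem_box hr hx, ← index_eq_of_mem_box hr hx']
    obtain rfl | hlt := hkk.eq_or_lt
    · rfl
    · have hlight := hq.2.2 k hlt
      rw [← index_eq_of_mem_box hr hx', ← index_eq_ancestor hlt.le,
        index_eq_of_mem_box hr hx] at hlight
      exact absurd hp.2.1 hlight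
  rintro ⟨p, hp⟩ ⟨q, hq⟩ hpq
  refine disjoint_left.2 fun x hx hx' => hpq ?_
  rcases le_total p.1 q.1 with h | h
  · exact Subtype.ext (key hp hq h x hx hx')
  · exact Subtype.ext (key hq hp h x hx' hx).symm

theorem czSet_subset_closedBall (hr : 0 < r) : czSet w c r t ⊆ closedBall c r :=
  iUnion_subset fun p => box_subset_closedBall hr p.2.1

theorem ae_mem_czSet (hr : 0 < r) (hw : LocallyIntegrable w) :
    ∀ᵐ x, t < w x → x ∈ closedBall c r → x ∈ czSet w c r t := by
  classical
  have hbox : ∀ᵐ x, x ∈ closedBall c r → x ∈ box c r 0 0 := by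
    have h := box_ae_eq_cube (c := c) hr 0 0
    rw [cube_zero] at h
    exact h.mono fun x hx hxQ => hx.symm.mp hxQ
  filter_upwards [hbox, ae_tendsto_average_cube_index hw hr] with x hbox hlim htw hxQ
  have hx0 := hbox hxQ
  have hex : ∃ k, IsHeavy w c r t k (index c r k x) := by
    obtain ⟨k, hk⟩ := ((hlim hx0).eventually (eventually_gt_nhds htw)).exists
    exact ⟨k, (isHeavy_iff hr).2 (by rwa [avgOn_eq_setAverage])⟩
  refine mem_iUnion.2 ⟨⟨(Nat.find hex, index c r (Nat.find hex) x),
    index_lt hr hx0 _, Nat.find_spec hex, fun m hm => ?_⟩,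
    mem_box_index hr (sub_le_of_mem_box hr hx0) _⟩
  rw [← index_eq_ancestor hm.le]
  exact Nat.find_min hex hm

theorem ae_lt_maximalFn_of_mem_czSet (hr : 0 < r) (hw0 : ∀ x, 0 ≤ w x)
    (hw : IntegrableOn w (closedBall c r)) :
    ∀ᵐ x, x ∈ czSet w c r t → t < maximalFn ((closedBall c r).indicator w) x := by
  filter_upwards [ae_bddAbove_cubeAverages
    ((integrable_indicator_iff measurableSet_closedBall).2 hw)] with x hbdd hx
  rw [czSet, mem_iUnion] at hx
  obtain ⟨⟨⟨k, j⟩, hj, hheavy, _⟩, hxbox⟩ := hx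
  have hQ : avgOn (cube c r k j) (fun y => |(closedBall c r).indicator w y|)
      = avgOn (cube c r k j) w := by
    rw [avgOn_cube_eq hr, avgOn_cube_eq hr]
    congr 1
    refine setIntegral_congr_fun (measurableSet_box k j) fun y hy => ?_
    simp only [indicator_of_mem (box_subset_closedBall hr hj hy), abs_of_nonneg (hw0 y)]
  refine lt_of_lt_of_le ?_
    (avgOn_le_maximalFn hbdd (isCube_cube hr k j) (box_subset_cube hr k j hxbox))
  rwa [hQ, ← isHeavy_iff hr]

end CalderonZygmund

end DyadicGrid

open DyadicGrid in
theorem setLIntegral_superlevel_le_measure_maximalFn {n : ℕ} {w : Rn n → ℝ} {c : Rn n}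
    {r t : ℝ} (hr : 0 < r) (hw0 : ∀ x, 0 ≤ w x) (hw : LocallyIntegrable w)
    (ht : intOn w (closedBall c r) ≤ t * (2 * r) ^ n) :
    ∫⁻ x in {y | t < w y}, ENNReal.ofReal (w x) ∂volume.restrict (closedBall c r)
      ≤ ENNReal.ofReal t * 2 ^ n *
        volume.restrict (closedBall c r) {x | t < maximalFn ((closedBall c r).indicator w) x} := by
  have hwQ : IntegrableOn w (closedBall c r) := hw.integrableOn_isCompact (isCompact_closedBall c r)
  have hdisj := pairwise_disjoint_czIndex (w := w) (c := c) (t := t) hr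
  have hcover : ({y | t < w y} ∩ closedBall c r : Set (Rn n)) ≤ᵐ[volume] czSet w c r t :=
    (ae_mem_czSet hr hw).mono fun x hx hxS => hx hxS.1 hxS.2
  have hmax : czSet w c r t ≤ᵐ[volume]
      ({x | t < maximalFn ((closedBall c r).indicator w) x} ∩ closedBall c r : Set (Rn n)) :=
    (ae_lt_maximalFn_of_mem_czSet hr hw0 hwQ).mono fun x hx hxS =>
      ⟨hx hxS, czSet_subset_closedBall hr hxS⟩
  rw [Measure.restrict_restrict' measurableSet_closedBall,
    Measure.restrict_apply' measurableSet_closedBall]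
  calc ∫⁻ x in {y | t < w y} ∩ closedBall c r, ENNReal.ofReal (w x)
      ≤ ∫⁻ x in czSet w c r t, ENNReal.ofReal (w x) :=
        lintegral_mono' (Measure.restrict_mono_ae hcover) le_rfl
    _ = ∑' p : czIndex w c r t, ∫⁻ x in box c r p.1.1 p.1.2, ENNReal.ofReal (w x) :=
        lintegral_iUnion (fun p => measurableSet_box _ _) hdisj _
    _ ≤ ∑' p : czIndex w c r t, ENNReal.ofReal t * 2 ^ n * volume (box c r p.1.1 p.1.2) := by
        refine ENNReal.tsum_le_tsum fun p => ?_
        rw [← ofReal_integral_eq_lintegral_ofReal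
          (hwQ.mono_set (box_subset_closedBall hr p.2.1)) (ae_of_all _ fun x => hw0 x),
          volume_box hr, ← ENNReal.ofReal_ofNat 2, ← ENNReal.ofReal_pow zero_le_two,
          ← ENNReal.ofReal_mul' (by positivity),
          ← ENNReal.ofReal_mul' (pow_nonneg (side_pos hr _).le n)]
        refine ENNReal.ofReal_le_ofReal ?_
        linarith [integral_box_le_of_mem_czIndex hr hw0 hwQ ht p.2]
    _ = ENNReal.ofReal t * 2 ^ n * volume (czSet w c r t) := by
        rw [czSet, measure_iUnion hdisj (fun p => measurableSet_box _ _), ENNReal.tsum_mul_left]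
    _ ≤ ENNReal.ofReal t * 2 ^ n *
          volume ({x | t < maximalFn ((closedBall c r).indicator w) x} ∩ closedBall c r) := by
        gcongr 1
        exact measure_mono_ae hmax

section CubeEstimate

variable {n : ℕ} {w : Rn n → ℝ}

theorem integral_maximalFn_sub_avgOn {c : Rn n} {r : ℝ} (hr : 0 < r)
    (hM : IntegrableOn (maximalFn ((closedBall c r).indicator w)) (closedBall c r)) :
    ∫ x in closedBall c r, (maximalFn ((closedBall c r).indicator w) x - avgOn (closedBall c r) w)
      = (∫ x in closedBall c r, maximalFn ((closedBall c r).indicator w) x)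
        - intOn w (closedBall c r) := by
  have hvol : volume.real (closedBall c r) = vol (closedBall c r) := rfl
  rw [integral_sub hM (integrableOn_const (by simp [volume_closedBall_rn c hr.le])),
    setIntegral_const, smul_eq_mul, avgOn, hvol, ← mul_assoc,
    mul_inv_cancel₀ (by rw [vol_closedBall c hr.le]; positivity), one_mul, intOn]

theorem lintegral_log_sub_log_avgOn_le {c : Rn n} {r : ℝ} (hr : 0 < r) (hw : Measurable w)
    (hw0 : ∀ x, 0 ≤ w x) (hwl : LocallyIntegrable w) (ha : 0 < avgOn (closedBall c r) w)
    (hM : IntegrableOn (maximalFn ((closedBall c r).indicator w)) (closedBall c r)) :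
    ∫⁻ x in closedBall c r, ENNReal.ofReal ((log (w x) - log (avgOn (closedBall c r) w)) * w x)
      ≤ 2 ^ n * ∫⁻ x in closedBall c r,
        ENNReal.ofReal (maximalFn ((closedBall c r).indicator w) x - avgOn (closedBall c r) w) := by
  rw [lintegral_log_sub_log_mul_eq hw hw0 ha, ← lintegral_Ioi_measure_lt hM.aemeasurable,
    ← lintegral_const_mul' _ _ (by simp)]
  refine setLIntegral_mono' measurableSet_Ioi fun t (ht : avgOn _ w < t) => ?_
  have ht0 : ENNReal.ofReal t ≠ 0 := (ENNReal.ofReal_pos.2 (ha.trans ht)).ne'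
  have hW : intOn w (closedBall c r) ≤ t * (2 * r) ^ n := by
    rw [avgOn, vol_closedBall c hr.le] at ht
    rw [intOn, ← div_le_iff₀ (by positivity), div_eq_inv_mul]
    exact ht.le
  calc (ENNReal.ofReal t)⁻¹ * ∫⁻ x in {y | t < w y}, ENNReal.ofReal (w x) ∂volume.restrict _
      ≤ (ENNReal.ofReal t)⁻¹ * (ENNReal.ofReal t * 2 ^ n * volume.restrict (closedBall c r)
          {x | t < maximalFn ((closedBall c r).indicator w) x}) :=
        by gcongr; exact setLIntegral_superlevel_le_measure_maximalFn hr hw0 hwl hW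
    _ = 2 ^ n * volume.restrict (closedBall c r)
          {x | t < maximalFn ((closedBall c r).indicator w) x} := by
        rw [← mul_assoc, ← mul_assoc, ENNReal.inv_mul_cancel ht0 ENNReal.ofReal_ne_top, one_mul]

theorem integral_abs_log_sub_wavgOn_le {c : Rn n} {r : ℝ} (hr : 0 < r)
    (hw : Measurable w) (hw0 : ∀ x, 0 ≤ w x) (hwpos : ∀ᵐ x, 0 < w x) (hwl : LocallyIntegrable w)
    (hW : 0 < intOn w (closedBall c r))
    (hM : IntegrableOn (maximalFn ((closedBall c r).indicator w)) (closedBall c r))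
    (hlog : IntegrableOn (fun x => log (w x) * w x) (closedBall c r)) :
    ∫ x in closedBall c r, |log (w x) - wavgOn w (closedBall c r) (fun y => log (w y))| * w x
      ≤ 2 ^ (n + 1) * ((∫ x in closedBall c r, maximalFn ((closedBall c r).indicator w) x)
        - intOn w (closedBall c r)) := by
  have ha : 0 < avgOn (closedBall c r) w := by
    rw [avgOn, vol_closedBall c hr.le]
    exact mul_pos (by positivity) hW
  set Q := closedBall c r
  set M := maximalFn (Q.indicator w)
  set a := avgOn Q w
  have hQ : volume Q ≠ ⊤ := measure_closedBall_lt_top.ne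
  have : IsFiniteMeasure (volume.restrict Q) := isFiniteMeasure_restrict.2 hQ
  have hwQ : IntegrableOn w Q := hwl.integrableOn_isCompact (isCompact_closedBall c r)
  have hosc := integral_abs_log_sub_wavg_le (μ := volume.restrict Q) hwQ (ae_restrict_of_ae hwpos)
    hlog (by rwa [← avgOn_eq_setAverage])
  rw [← avgOn_eq_setAverage] at hosc
  have hMa : 0 ≤ᵐ[volume.restrict Q] fun x => M x - a :=
    (ae_avgOn_le_maximalFn hw0 ⟨c, r, hr, rfl⟩ hwQ).mono fun x hx => sub_nonneg.2 hx
  have hlayer : ∫ x in Q, max ((log (w x) - log a) * w x) 0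
      ≤ 2 ^ n * ∫ x in Q, (M x - a) := by
    rw [integral_eq_lintegral_of_nonneg_ae (f := fun x => max ((log (w x) - log a) * w x) 0)
      (ae_of_all _ fun x => le_max_right _ _) (by fun_prop)]
    simp only [ENNReal.ofReal_max, ENNReal.ofReal_zero, max_zero]
    rw [← ENNReal.toReal_ofReal (integral_nonneg_of_ae hMa), ← ENNReal.toReal_ofNat,
      ← ENNReal.toReal_pow, ← ENNReal.toReal_mul]
    have h := lintegral_log_sub_log_avgOn_le hr hw hw0 hwl ha hM
    rw [← ofReal_integral_eq_lintegral_ofReal (f := fun x => M x - a)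
        (hM.sub (integrableOn_const hQ)) hMa] at h
    exact ENNReal.toReal_mono (by finiteness) h
  calc _ ≤ 2 * ∫ x in Q, max ((log (w x) - log a) * w x) 0 := hosc
    _ ≤ 2 * (2 ^ n * ∫ x in Q, (M x - a)) := by gcongr
    _ = _ := by rw [integral_maximalFn_sub_avgOn hr hM]; ring

end CubeEstimate

section Ratios

variable {n : ℕ}

def fwRatio (w : Rn n → ℝ) (Q : Set (Rn n)) : ℝ :=
  (intOn w Q)⁻¹ * ∫ x in Q, maximalFn (Q.indicator w) x

def logOsc (w : Rn n → ℝ) (Q : Set (Rn n)) : ℝ :=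
  (intOn w Q)⁻¹ * ∫ x in Q, |log (w x) - wavgOn w Q (fun y => log (w y))| * w x

variable {w v : Rn n → ℝ}

theorem intOn_congr_ae (h : w =ᵐ[volume] v) (Q : Set (Rn n)) : intOn w Q = intOn v Q :=
  integral_congr_ae (ae_restrict_of_ae h)

theorem maximalFn_indicator_congr_ae (h : w =ᵐ[volume] v) (Q : Set (Rn n)) :
    maximalFn (Q.indicator w) = maximalFn (Q.indicator v) :=
  maximalFn_congr_ae (h.mono fun x (hx : w x = v x) =>
    show Q.indicator w x = Q.indicator v x by unfold Set.indicator; rw [hx])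

theorem fwRatio_congr_ae (h : w =ᵐ[volume] v) (Q : Set (Rn n)) : fwRatio w Q = fwRatio v Q := by
  rw [fwRatio, fwRatio, intOn_congr_ae h, maximalFn_indicator_congr_ae h]

theorem logOsc_congr_ae (h : w =ᵐ[volume] v) (Q : Set (Rn n)) : logOsc w Q = logOsc v Q := by
  have hwavg : wavgOn w Q (fun y => log (w y)) = wavgOn v Q (fun y => log (v y)) := by
    have hae : ∀ᵐ x ∂volume.restrict Q, log (w x) * w x = log (v x) * v x :=
      ae_restrict_of_ae (h.mono fun x hx => by rw [hx])
    rw [wavgOn, wavgOn, intOn_congr_ae h, integral_congr_ae hae]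
  have hae : ∀ᵐ x ∂volume.restrict Q, |log (w x) - wavgOn v Q (fun y => log (v y))| * w x
      = |log (v x) - wavgOn v Q (fun y => log (v y))| * v x :=
    ae_restrict_of_ae (h.mono fun x hx => by rw [hx])
  rw [logOsc, logOsc, intOn_congr_ae h, hwavg, integral_congr_ae hae]

theorem logOsc_le_of_measurable (hw : Measurable w) (hw0 : ∀ x, 0 ≤ w x)
    (hwpos : ∀ᵐ x, 0 < w x) (hwl : LocallyIntegrable w) {Q : Set (Rn n)} (hQ : IsCube Q)
    (hW : 0 < intOn w Q) (hM : IntegrableOn (maximalFn (Q.indicator w)) Q)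
    (hlog : IntegrableOn (fun x => log (w x) * w x) Q) :
    logOsc w Q ≤ 2 ^ (n + 1) * (fwRatio w Q - 1) ∧ 1 ≤ fwRatio w Q := by
  obtain ⟨c, r, hr, rfl⟩ := hQ
  have hwQ : IntegrableOn w (closedBall c r) :=
    hwl.integrableOn_isCompact (isCompact_closedBall c r)
  have hWM : intOn w (closedBall c r)
      ≤ ∫ x in closedBall c r, maximalFn ((closedBall c r).indicator w) x := by
    rw [← sub_nonneg, ← integral_maximalFn_sub_avgOn hr hM]
    exact integral_nonneg_of_ae ((ae_avgOn_le_maximalFn hw0 ⟨c, r, hr, rfl⟩ hwQ).mono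
      fun x hx => sub_nonneg.2 hx)
  refine ⟨?_, by rwa [fwRatio, le_inv_mul_iff₀ hW, mul_one]⟩
  calc logOsc w (closedBall c r)
      ≤ (intOn w (closedBall c r))⁻¹ * (2 ^ (n + 1) *
        ((∫ x in closedBall c r, maximalFn ((closedBall c r).indicator w) x)
          - intOn w (closedBall c r))) :=
        mul_le_mul_of_nonneg_left (integral_abs_log_sub_wavgOn_le hr hw hw0 hwpos hwl hW hM hlog)
          (inv_nonneg.2 hW.le)
    _ = 2 ^ (n + 1) * (fwRatio w (closedBall c r) - 1) := by
        rw [fwRatio]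
        field_simp

theorem logOsc_le (hwpos : ∀ᵐ x, 0 < w x) (hwl : LocallyIntegrable w) {Q : Set (Rn n)}
    (hQ : IsCube Q) (hW : 0 < intOn w Q) (hM : IntegrableOn (maximalFn (Q.indicator w)) Q)
    (hlog : IntegrableOn (fun x => log (w x) * w x) Q) :
    logOsc w Q ≤ 2 ^ (n + 1) * (fwRatio w Q - 1) ∧ 1 ≤ fwRatio w Q := by
  obtain ⟨v, hv, hvpos, hwv⟩ :=
    hwl.aestronglyMeasurable.aemeasurable.exists_ae_eq_range_subset hwpos nonempty_Ioi
  have hv0 : ∀ x, 0 < v x := fun x => hvpos ⟨x, rfl⟩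
  rw [logOsc_congr_ae hwv, fwRatio_congr_ae hwv]
  rw [intOn_congr_ae hwv] at hW
  rw [maximalFn_indicator_congr_ae hwv] at hM
  exact logOsc_le_of_measurable hv (fun x => (hv0 x).le) (ae_of_all _ hv0) (hwl.congr hwv) hQ hW
    hM (hlog.congr_fun_ae (ae_restrict_of_ae (hwv.mono fun x hx => by simp only [hx])))

end Ratios

theorem stmt11_general {n : ℕ} (w : Rn n → ℝ)
    (hwpos : ∀ᵐ x ∂(volume : Measure (Rn n)), 0 < w x)
    (hwl : LocallyIntegrable w volume)
    (hpos : ∀ Q : Set (Rn n), IsCube Q → 0 < intOn w Q)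
    (hM : ∀ Q : Set (Rn n), IsCube Q →
      IntegrableOn (maximalFn (Q.indicator w)) Q volume)
    (hlogint : ∀ Q : Set (Rn n), IsCube Q →
      IntegrableOn (fun x => Real.log (w x) * w x) Q volume)
    (hfw : BddAbove (fwSet w)) :
    (∀ Q : Set (Rn n), IsCube Q →
      (intOn w Q)⁻¹ *
          (∫ x in Q, |Real.log (w x) - wavgOn w Q (fun y => Real.log (w y))| * w x)
        ≤ (2 : ℝ) ^ (n + 3) * (fujiiWilson w - 1)) ∧
    (∀ Q : Set (Rn n), IsCube Q →
      (intOn w Q)⁻¹ *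
          (∫ x in Q, |Real.log (w x) - wavgOn w Q (fun y => Real.log (w y))| * w x)
        ≤ (2 : ℝ) ^ (n + 3) *
            ((intOn w Q)⁻¹ * (∫ x in Q, maximalFn (Q.indicator w) x) - 1)) := by
  have hcube : ∀ Q, IsCube Q → logOsc w Q ≤ 2 ^ (n + 3) * (fwRatio w Q - 1) := fun Q hQ => by
    obtain ⟨hosc, hone⟩ := logOsc_le hwpos hwl hQ (hpos Q hQ) (hM Q hQ) (hlogint Q hQ)
    refine hosc.trans (mul_le_mul_of_nonneg_right ?_ (sub_nonneg.2 hone))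
    exact pow_le_pow_right₀ one_le_two (by omega)
  refine ⟨fun Q hQ => (hcube Q hQ).trans ?_, hcube⟩
  have hfwQ : fwRatio w Q ≤ fujiiWilson w := le_csSup hfw ⟨Q, hQ, rfl⟩
  gcongr

/-- For `w ∈ A_∞`, `log w` is in weighted `BMO` with
`‖log w‖_{BMO_w} ≤ 2^(n+3)([w]_{A∞} - 1)`; moreover, the corresponding localized
estimate holds on each cube. -/
theorem stmt11 {n : ℕ} (w : Rn n → ℝ) (hw0 : ∀ x, 0 ≤ w x)
    (hwpos : ∀ᵐ x ∂(volume : Measure (Rn n)), 0 < w x)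
    (hwl : LocallyIntegrable w volume)
    (hpos : ∀ Q : Set (Rn n), IsCube Q → 0 < intOn w Q)
    (hM : ∀ Q : Set (Rn n), IsCube Q →
      IntegrableOn (maximalFn (Q.indicator w)) Q volume)
    (hlogint : ∀ Q : Set (Rn n), IsCube Q →
      IntegrableOn (fun x => Real.log (w x) * w x) Q volume)
    (hfw : BddAbove (fwSet w)) :
    (∀ Q : Set (Rn n), IsCube Q →
      (intOn w Q)⁻¹ *
          (∫ x in Q, |Real.log (w x) - wavgOn w Q (fun y => Real.log (w y))| * w x)
        ≤ (2 : ℝ) ^ (n + 3) * (fujiiWilson w - 1)) ∧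
    (∀ Q : Set (Rn n), IsCube Q →
      (intOn w Q)⁻¹ *
          (∫ x in Q, |Real.log (w x) - wavgOn w Q (fun y => Real.log (w y))| * w x)
        ≤ (2 : ℝ) ^ (n + 3) *
            ((intOn w Q)⁻¹ * (∫ x in Q, maximalFn (Q.indicator w) x) - 1)) :=
  stmt11_general w hwpos hwl hpos hM hlogint hfw
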